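/- arXiv:1009.2673 — 4 statements merged into one kernel-verified Lean document; each statement's English description precedes it below -/
import Mathlib

section
/- Let E be a real inner product space of dimension 2n with 2n ≥ 4, and let J be an almost complex structure on E compatible with the metric. Let T : E×E×E×E → ℝ be a multilinear map satisfying: (1) T(x,y,z,u) = -T(y,x,z,u); (2) T(x,y,z,u) + T(y,z,x,u) + T(z,x,y,u) = 0; (3) T(x,y,z,u) = -T(x,y,u,z); (4) T(x,y,z,u) = T(Jx,Jy,Jz,Ju); (5) T(x,y,y,x) = 0 whenever {x,y} is an orthonormal pair with y = Jx (holomorphic plane) or with ⟨Jx,y⟩ = 0 (antiholomorphic plane). Then T = 0. -/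
open scoped RealInnerProductSpace

/-!
Polarizing the holomorphic condition `T(v, Jv, Jv, v) = 0` along `x + t z` and using the
`J`-invariance gives `T(x, w, Jx, x) = 0` for all `x, w`. Splitting `y` into its component in
the holomorphic plane `span {x, Jx}` and a part `z` orthogonal to it, the antiholomorphic
condition kills `T(x, z, z, x)`, so all sectional values `T(x, y, y, x)` vanish, and a tensor
with the curvature symmetries is determined by its sectional values.
-/

section CurvatureLike

variable {M : Type*} [AddCommGroup M] [Module ℝ M]

structure IsCurvatureLike (T : M →ₗ[ℝ] M →ₗ[ℝ] M →ₗ[ℝ] M →ₗ[ℝ] ℝ) : Prop where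
  antisymm_left : ∀ x y z u : M, T x y z u = - T y x z u
  bianchi : ∀ x y z u : M, T x y z u + T y z x u + T z x y u = 0
  antisymm_right : ∀ x y z u : M, T x y z u = - T x y u z

theorem sectional_smul_smul (T : M →ₗ[ℝ] M →ₗ[ℝ] M →ₗ[ℝ] M →ₗ[ℝ] ℝ) (a b : ℝ) (x y : M) :
    T (a • x) (b • y) (b • y) (a • x) = (a * b) ^ 2 * T x y y x := by
  simp only [map_smul, LinearMap.smul_apply, smul_eq_mul]
  ring

namespace IsCurvatureLike

variable {T : M →ₗ[ℝ] M →ₗ[ℝ] M →ₗ[ℝ] M →ₗ[ℝ] ℝ} (hT : IsCurvatureLike T)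
include hT

theorem apply_self_left (x z u : M) : T x x z u = 0 := by
  linarith [hT.antisymm_left x x z u]

theorem apply_self_right (x y z : M) : T x y z z = 0 := by
  linarith [hT.antisymm_right x y z z]

/-- Milnor's octahedron argument: four Bianchi identities, normalized by the antisymmetries. -/
theorem pair_symm (x y z u : M) : T x y z u = T z u x y := by
  linear_combination (hT.bianchi x y z u - hT.bianchi x y u z - hT.bianchi x z u y
    + hT.bianchi y z u x + hT.antisymm_right x y z u - hT.antisymm_left x z y u
    + hT.antisymm_right x z y u + hT.antisymm_left x u y z - hT.antisymm_right x u y z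
    + hT.antisymm_left x u z y - hT.antisymm_right y z x u + hT.antisymm_right y u x z
    - hT.antisymm_left y u z x - hT.antisymm_right z u x y) / 2

section Sectional

variable (hsec : ∀ x y : M, T x y y x = 0)
include hsec

theorem apply_self_middle_eq_zero (x y z : M) : T x y y z = 0 := by
  have e := hsec (x + z) y
  simp only [map_add, LinearMap.add_apply, hsec, zero_add, add_zero] at e
  linear_combination e / 2 - hT.pair_symm z y y x / 2 - hT.antisymm_left y x z y / 2
    + hT.antisymm_right x y z y / 2

theorem antisymm_middle (x y w z : M) : T x y w z = - T x w y z := by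
  have e := hT.apply_self_middle_eq_zero hsec x (y + w) z
  simp only [map_add, LinearMap.add_apply] at e
  linear_combination e - hT.apply_self_middle_eq_zero hsec x y z
    - hT.apply_self_middle_eq_zero hsec x w z

/-- By the antisymmetry in the middle pair, the three terms of the Bianchi identity are equal. -/
theorem eq_zero_of_sectional (x y z u : M) : T x y z u = 0 := by
  linear_combination (hT.bianchi x y z u - 2 * hT.antisymm_middle hsec y z x u
    + 2 * hT.antisymm_left y x z u - hT.antisymm_middle hsec z x y u
    + hT.antisymm_left z y x u) / 3

end Sectional

section Holomorphic

variable {J : M →ₗ[ℝ] M} (hH : ∀ v : M, T v (J v) (J v) v = 0)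
include hH

/-- The linear coefficient in `t` of the quartic `t ↦ T (x + t z) (J (x + t z)) ⋯`, read off
from its values at `t = ±1, ±2`. -/
theorem holomorphic_polarization (x z : M) :
    T z (J x) (J x) x + T x (J z) (J x) x = 0 := by
  have e := fun t : ℝ => hH (x + t • z)
  simp only [map_add, map_smul, LinearMap.add_apply, LinearMap.smul_apply, smul_eq_mul] at e
  have linear_coeff : T z (J x) (J x) x + T x (J z) (J x) x + T x (J x) (J z) x
      + T x (J x) (J x) z = 0 := by
    linear_combination (8 * (e 1 - e (-1)) - (e 2 - e (-2))) / 12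
  linear_combination (linear_coeff - hT.pair_symm x (J x) (J x) z
    - hT.antisymm_left (J x) z x (J x) + hT.antisymm_right z (J x) x (J x)
    - hT.bianchi x (J x) (J z) x + hT.apply_self_right (J x) (J z) x
    + hT.antisymm_left (J z) x (J x) x) / 2

theorem apply_J_self_eq_zero (hJ2 : ∀ x : M, J (J x) = -x)
    (h4 : ∀ x y z u : M, T x y z u = T (J x) (J y) (J z) (J u)) (x w : M) :
    T x w (J x) x = 0 := by
  have hpol := hT.holomorphic_polarization hH x (J w)
  have hJ := h4 x w (J x) x
  simp only [hJ2, map_neg, LinearMap.neg_apply] at hpol hJ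
  linear_combination (hJ - hT.antisymm_left (J x) (J w) x (J x)
    + hT.antisymm_right (J w) (J x) (J x) x - hpol) / 2

end Holomorphic

end IsCurvatureLike

end CurvatureLike

section Kahler

variable {E : Type*} [NormedAddCommGroup E] [InnerProductSpace ℝ E] {J : E →ₗ[ℝ] E}
  {T : E →ₗ[ℝ] E →ₗ[ℝ] E →ₗ[ℝ] E →ₗ[ℝ] ℝ}

theorem inner_self_apply_eq_zero (hJ2 : ∀ x : E, J (J x) = -x)
    (hJg : ∀ x y : E, ⟪J x, J y⟫ = ⟪x, y⟫) (v : E) : ⟪v, J v⟫ = 0 := by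
  have h := hJg v (J v)
  rw [hJ2, inner_neg_right, real_inner_comm] at h
  linarith

theorem norm_apply_eq (hJg : ∀ x y : E, ⟪J x, J y⟫ = ⟪x, y⟫) (v : E) : ‖J v‖ = ‖v‖ := by
  rw [← sq_eq_sq₀ (norm_nonneg _) (norm_nonneg _), ← real_inner_self_eq_norm_sq,
    ← real_inner_self_eq_norm_sq, hJg]

theorem holomorphic_of_unit (h : ∀ x : E, ‖x‖ = 1 → T x (J x) (J x) x = 0) (v : E) :
    T v (J v) (J v) v = 0 := by
  rcases eq_or_ne v 0 with rfl | hv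
  · simp
  have hunit := h (‖v‖⁻¹ • v) (norm_smul_inv_norm hv)
  rw [J.map_smul, sectional_smul_smul] at hunit
  exact (mul_eq_zero.mp hunit).resolve_left (by positivity)

theorem antiholomorphic_of_unit
    (h : ∀ x z : E, ‖x‖ = 1 → ‖z‖ = 1 → ⟪x, z⟫ = 0 → ⟪J x, z⟫ = 0 → T x z z x = 0)
    {x z : E} (hxz : ⟪x, z⟫ = 0) (hJxz : ⟪J x, z⟫ = 0) : T x z z x = 0 := by
  rcases eq_or_ne x 0 with rfl | hx
  · simp
  rcases eq_or_ne z 0 with rfl | hz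
  · simp
  have hunit := h (‖x‖⁻¹ • x) (‖z‖⁻¹ • z) (norm_smul_inv_norm hx) (norm_smul_inv_norm hz)
    (by simp [real_inner_smul_left, real_inner_smul_right, hxz])
    (by simp [map_smul, real_inner_smul_left, real_inner_smul_right, hJxz])
  rw [sectional_smul_smul] at hunit
  exact (mul_eq_zero.mp hunit).resolve_left (by positivity)

/-- Write `‖x‖² y = ⟪x, y⟫ x + ⟪J x, y⟫ J x + z` with `z ⟂ x, J x` and expand. -/
theorem IsCurvatureLike.sectional_eq_zero (hT : IsCurvatureLike T)
    (hJ2 : ∀ x : E, J (J x) = -x) (hJg : ∀ x y : E, ⟪J x, J y⟫ = ⟪x, y⟫)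
    (h4 : ∀ x y z u : E, T x y z u = T (J x) (J y) (J z) (J u))
    (hH : ∀ v : E, T v (J v) (J v) v = 0)
    (hA : ∀ x z : E, ⟪x, z⟫ = 0 → ⟪J x, z⟫ = 0 → T x z z x = 0) (x y : E) :
    T x y y x = 0 := by
  rcases eq_or_ne x 0 with rfl | hx
  · simp
  set r : ℝ := ⟪x, x⟫
  set z : E := r • y - ⟪x, y⟫ • x - ⟪J x, y⟫ • J x with hz
  have hxJx := inner_self_apply_eq_zero hJ2 hJg x
  have hJxx : ⟪J x, x⟫ = 0 := by rwa [real_inner_comm]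
  have hxz : ⟪x, z⟫ = 0 := by
    simp only [hz, inner_sub_right, real_inner_smul_right, hxJx, r]
    ring
  have hJxz : ⟪J x, z⟫ = 0 := by
    simp only [hz, inner_sub_right, real_inner_smul_right, hJxx, hJg, r]
    ring
  have hry : r • y = ⟪x, y⟫ • x + ⟪J x, y⟫ • J x + z := by
    rw [hz]
    abel
  have hJz : T x (J x) z x = 0 := by
    linear_combination hT.bianchi x (J x) z x - hT.apply_self_right (J x) z x
      - hT.antisymm_left z x (J x) x + hT.apply_J_self_eq_zero hH hJ2 h4 x z
  have expand : r ^ 2 * T x y y x = 0 := by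
    have e := sectional_smul_smul T 1 r x y
    rw [one_smul, hry] at e
    simp only [map_add, map_smul, LinearMap.add_apply, LinearMap.smul_apply, smul_eq_mul,
      hT.apply_self_left, hT.apply_self_right, hH, hA x z hxz hJxz,
      hT.apply_J_self_eq_zero hH hJ2 h4, hJz] at e
    linear_combination -e
  have hr : r ≠ 0 := inner_self_ne_zero.mpr hx
  exact (mul_eq_zero.mp expand).resolve_left (pow_ne_zero 2 hr)

end Kahler

theorem stmt_0_general {E : Type*} [NormedAddCommGroup E] [InnerProductSpace ℝ E]
    (J : E →ₗ[ℝ] E)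
    (hJ2 : ∀ x : E, J (J x) = -x)
    (hJg : ∀ x y : E, ⟪J x, J y⟫ = ⟪x, y⟫)
    (T : E →ₗ[ℝ] E →ₗ[ℝ] E →ₗ[ℝ] E →ₗ[ℝ] ℝ)
    (h1 : ∀ x y z u : E, T x y z u = - T y x z u)
    (h2 : ∀ x y z u : E, T x y z u + T y z x u + T z x y u = 0)
    (h3 : ∀ x y z u : E, T x y z u = - T x y u z)
    (h4 : ∀ x y z u : E, T x y z u = T (J x) (J y) (J z) (J u))
    (h5 : ∀ x y : E, ‖x‖ = 1 → ‖y‖ = 1 → ⟪x, y⟫ = 0 →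
      (y = J x ∨ ⟪J x, y⟫ = 0) → T x y y x = 0) :
    ∀ x y z u : E, T x y z u = 0 := by
  have hT : IsCurvatureLike T := ⟨h1, h2, h3⟩
  have hH : ∀ v : E, T v (J v) (J v) v = 0 :=
    holomorphic_of_unit fun x hx =>
      h5 x (J x) hx (by rw [norm_apply_eq hJg, hx]) (inner_self_apply_eq_zero hJ2 hJg x)
        (Or.inl rfl)
  have hA : ∀ x z : E, ⟪x, z⟫ = 0 → ⟪J x, z⟫ = 0 → T x z z x = 0 := fun x z =>
    antiholomorphic_of_unit fun x z hx hz hxz hJxz => h5 x z hx hz hxz (Or.inr hJxz)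
  exact hT.eq_zero_of_sectional (hT.sectional_eq_zero hJ2 hJg h4 hH hA)

/-- Lemma (Ganchev–Gribachev): a (0,4)-tensor with the curvature symmetries, the
Kähler identity `T(x,y,z,u) = T(Jx,Jy,Jz,Ju)`, and vanishing on all holomorphic and
antiholomorphic 2-planes, is identically zero. -/
theorem stmt_0 {E : Type*} [NormedAddCommGroup E] [InnerProductSpace ℝ E]
    [FiniteDimensional ℝ E] {n : ℕ} (hn : 4 ≤ 2 * n)
    (hdim : Module.finrank ℝ E = 2 * n)
    (J : E →ₗ[ℝ] E)
    (hJ2 : ∀ x : E, J (J x) = -x)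
    (hJg : ∀ x y : E, ⟪J x, J y⟫ = ⟪x, y⟫)
    (T : E →ₗ[ℝ] E →ₗ[ℝ] E →ₗ[ℝ] E →ₗ[ℝ] ℝ)
    (h1 : ∀ x y z u : E, T x y z u = - T y x z u)
    (h2 : ∀ x y z u : E, T x y z u + T y z x u + T z x y u = 0)
    (h3 : ∀ x y z u : E, T x y z u = - T x y u z)
    (h4 : ∀ x y z u : E, T x y z u = T (J x) (J y) (J z) (J u))
    (h5 : ∀ x y : E, ‖x‖ = 1 → ‖y‖ = 1 → ⟪x, y⟫ = 0 →
      (y = J x ∨ ⟪J x, y⟫ = 0) → T x y y x = 0) :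
    ∀ x y z u : E, T x y z u = 0 :=
  stmt_0_general J hJ2 hJg T h1 h2 h3 h4 h5
end

section
/- Let E be a real inner product space of dimension 2n with 2n ≥ 4, J a compatible almost complex structure, and R an algebraic curvature tensor on E that is an RK-tensor and has constant antiholomorphic sectional curvature ν. Then R = (1/6)ψ + ν·R₁ - ((2n-1)/3)·ν·R₂, i.e. R(x,y,z,u) = (1/6)ψ(x,y,z,u) + ν·R₁(x,y,z,u) - ((2n-1)/3)·ν·R₂(x,y,z,u) for all x,y,z,u ∈ E. -/
/-!
Put `T = Ric - (2n - 1) ν g` and `U = R - ν R₁ - ψ_T / 6`, where `ψ_T` is `ψ` with `T` in place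
of `S`. As `ψ_S - ψ_T = 2 (2n - 1) ν R₂`, the theorem says `U = 0`. Now `U` is again an RK
curvature tensor, `U x y y x = 0` on antiholomorphic pairs, and `Ric U = Ric - (2n - 1) ν g - T = 0`
because the Ricci contraction of `ψ_T` is `6 T`.

Such a tensor vanishes once `dim E ≥ 4`. For orthonormal `e, y` spanning an antiholomorphic plane,
the Ricci contraction can be computed in the frame `e, Je, y, Jy`, since `U w p q w = 0` for
suitable `p, q` and every `w` hermitian-orthogonal to `e` and `y`. This kills the holomorphic
curvature `U e Je Je e` and gives `U e Je y e = U y Jy e y`. On the other hand the pairs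
`(e + t Jy, y + t Je)` are antiholomorphic for all `t`, and the first variation of
`U X Y Y X = 0` along them gives `U e Je y e = - U y Jy e y`. Splitting any `y` along `x`, `Jx` and
their hermitian complement then gives `U x y y x = 0`, and a curvature tensor whose sectional form
vanishes is zero.
-/

open scoped RealInnerProductSpace

section CurvatureTensor

variable {M : Type*} [AddCommGroup M] [Module ℝ M]

structure IsCurvatureTensor (R : M →ₗ[ℝ] M →ₗ[ℝ] M →ₗ[ℝ] M →ₗ[ℝ] ℝ) : Prop where
  antisymm_left : ∀ x y z u, R x y z u = -R y x z u
  antisymm_right : ∀ x y z u, R x y z u = -R x y u z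
  bianchi : ∀ x y z u, R x y z u + R y z x u + R z x y u = 0

namespace IsCurvatureTensor

variable {R S : M →ₗ[ℝ] M →ₗ[ℝ] M →ₗ[ℝ] M →ₗ[ℝ] ℝ}

theorem add (hR : IsCurvatureTensor R) (hS : IsCurvatureTensor S) :
    IsCurvatureTensor (R + S) where
  antisymm_left x y z u := by
    simp only [LinearMap.add_apply]; rw [hR.antisymm_left, hS.antisymm_left]; ring
  antisymm_right x y z u := by
    simp only [LinearMap.add_apply]; rw [hR.antisymm_right, hS.antisymm_right]; ring
  bianchi x y z u := by
    simp only [LinearMap.add_apply]; linear_combination hR.bianchi x y z u + hS.bianchi x y z u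

theorem smul (hR : IsCurvatureTensor R) (c : ℝ) : IsCurvatureTensor (c • R) where
  antisymm_left x y z u := by
    simp only [LinearMap.smul_apply, smul_eq_mul]; rw [hR.antisymm_left]; ring
  antisymm_right x y z u := by
    simp only [LinearMap.smul_apply, smul_eq_mul]; rw [hR.antisymm_right]; ring
  bianchi x y z u := by
    simp only [LinearMap.smul_apply, smul_eq_mul]; linear_combination c * hR.bianchi x y z u

theorem apply_self_left (hR : IsCurvatureTensor R) (x z u : M) : R x x z u = 0 := by
  linarith [hR.antisymm_left x x z u]

theorem apply_self_right (hR : IsCurvatureTensor R) (x y z : M) : R x y z z = 0 := by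
  linarith [hR.antisymm_right x y z z]

theorem pair_symm (hR : IsCurvatureTensor R) (x y z u : M) : R x y z u = R z u x y := by
  linarith [hR.bianchi y z x u, hR.bianchi z x u y, hR.bianchi x u y z, hR.bianchi u y z x,
    hR.antisymm_right z x u y, hR.antisymm_right x u z y, hR.antisymm_left u z x y,
    hR.antisymm_right u y x z, hR.antisymm_left y x u z, hR.antisymm_right x y u z,
    hR.antisymm_right y z u x, hR.antisymm_right z u y x]

theorem middle_comm (hR : IsCurvatureTensor R) (x p q : M) : R x p q x = R x q p x := by
  rw [hR.pair_symm, hR.antisymm_left, hR.antisymm_right, neg_neg]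

theorem eq_zero_of_apply_apply_eq_zero (hR : IsCurvatureTensor R)
    (h : ∀ x y, R x y y x = 0) : R = 0 := by
  have h₁ : ∀ x y w, R x y y w = 0 := fun x y w => by
    have := h (x + w) y
    simp only [map_add, LinearMap.add_apply, h x y, h w y] at this
    linarith [hR.pair_symm w y y x, hR.antisymm_left y x w y, hR.antisymm_right x y w y]
  have h₂ : ∀ x y z w, R x y z w = -R x z y w := fun x y z w => by
    have := h₁ x (y + z) w
    simp only [map_add, LinearMap.add_apply, h₁ x y w, h₁ x z w] at this
    linarith
  ext x y z u
  simp only [LinearMap.zero_apply]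
  linarith [hR.bianchi x y z u, h₂ y z x u, hR.antisymm_left y x z u, hR.antisymm_left z x y u,
    h₂ x z y u]

end IsCurvatureTensor

theorem LinearMap.first_variation_eq_zero (U : M →ₗ[ℝ] M →ₗ[ℝ] M →ₗ[ℝ] M →ₗ[ℝ] ℝ)
    (x y v w : M) (h : ∀ t : ℝ, U (x + t • v) (y + t • w) (y + t • w) (x + t • v) = 0) :
    U v y y x + U x w y x + U x y w x + U x y y v = 0 := by
  have hodd : ∀ t : ℝ, t * ((U v y y x + U x w y x + U x y w x + U x y y v)
      + t ^ 2 * (U v w w x + U v w y v + U v y w v + U x w w v)) = 0 := fun t => by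
    have hpos := h t
    have hneg := h (-t)
    simp only [map_add, map_smul, LinearMap.add_apply, LinearMap.smul_apply, smul_eq_mul]
      at hpos hneg
    linear_combination (hpos - hneg) / 2
  linear_combination (4 * hodd 1 - hodd 2 / 2) / 3

def bilinMul₁₂ (A B : M →ₗ[ℝ] M →ₗ[ℝ] ℝ) : M →ₗ[ℝ] M →ₗ[ℝ] M →ₗ[ℝ] M →ₗ[ℝ] ℝ :=
  A.compr₂ (LinearMap.toSpanSingleton ℝ _ B)

def bilinMul₁₃ (A B : M →ₗ[ℝ] M →ₗ[ℝ] ℝ) : M →ₗ[ℝ] M →ₗ[ℝ] M →ₗ[ℝ] M →ₗ[ℝ] ℝ :=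
  (LinearMap.smulRightₗ ∘ₗ A).compl₂ B

def bilinMul₁₄ (A B : M →ₗ[ℝ] M →ₗ[ℝ] ℝ) : M →ₗ[ℝ] M →ₗ[ℝ] M →ₗ[ℝ] M →ₗ[ℝ] ℝ :=
  (bilinMul₁₃ B A).flip

@[simp]
theorem bilinMul₁₂_apply (A B : M →ₗ[ℝ] M →ₗ[ℝ] ℝ) (x y z u : M) :
    bilinMul₁₂ A B x y z u = A x y * B z u :=
  rfl

@[simp]
theorem bilinMul₁₃_apply (A B : M →ₗ[ℝ] M →ₗ[ℝ] ℝ) (x y z u : M) :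
    bilinMul₁₃ A B x y z u = A x z * B y u :=
  rfl

@[simp]
theorem bilinMul₁₄_apply (A B : M →ₗ[ℝ] M →ₗ[ℝ] ℝ) (x y z u : M) :
    bilinMul₁₄ A B x y z u = A x u * B y z :=
  mul_comm _ _

end CurvatureTensor

section InnerProductSpace

variable {E : Type*} [NormedAddCommGroup E] [InnerProductSpace ℝ E]
variable {ι : Type*} [Fintype ι]

theorem exists_smul_norm_eq_one {x : E} (hx : x ≠ 0) :
    ∃ r : ℝ, r ≠ 0 ∧ ∃ e : E, ‖e‖ = 1 ∧ x = r • e :=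
  ⟨‖x‖, norm_ne_zero_iff.mpr hx, ‖x‖⁻¹ • x, norm_smul_inv_norm hx,
    (smul_inv_smul₀ (norm_ne_zero_iff.mpr hx) x).symm⟩

theorem exists_norm_eq_one_inner_eq_zero (hE : 2 < Module.finrank ℝ E) (x z : E) :
    ∃ y : E, ‖y‖ = 1 ∧ ⟪x, y⟫ = 0 ∧ ⟪z, y⟫ = 0 := by
  have := Module.finite_of_finrank_pos (R := ℝ) (M := E) (by omega)
  set K := Submodule.span ℝ (Set.range ![x, z])
  have hK : Module.finrank ℝ K ≤ 2 := (finrank_range_le_card _).trans (by simp)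
  have hKperp : Kᗮ ≠ ⊥ := fun h => by
    have := K.finrank_add_finrank_orthogonal
    rw [h, finrank_bot] at this
    omega
  obtain ⟨v, hv, hv0⟩ := Submodule.exists_mem_ne_zero_of_ne_bot hKperp
  have hxv : ⟪x, v⟫ = 0 :=
    Submodule.inner_right_of_mem_orthogonal (Submodule.subset_span (Set.mem_range_self 0)) hv
  have hzv : ⟪z, v⟫ = 0 :=
    Submodule.inner_right_of_mem_orthogonal (Submodule.subset_span (Set.mem_range_self 1)) hv
  exact ⟨‖v‖⁻¹ • v, norm_smul_inv_norm hv0, by simp [real_inner_smul_right, hxv],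
    by simp [real_inner_smul_right, hzv]⟩

theorem OrthonormalBasis.sum_inner_mul_apply (b : OrthonormalBasis ι ℝ E) (L : E →ₗ[ℝ] ℝ)
    (v : E) : ∑ i, ⟪v, b i⟫ * L (b i) = L v := by
  conv_rhs => rw [← b.sum_repr' v]
  simp [map_sum, real_inner_comm]

theorem OrthonormalBasis.sum_apply_self_eq {ι' : Type*} [Fintype ι']
    (b : OrthonormalBasis ι ℝ E) (b' : OrthonormalBasis ι' ℝ E) (B : E →ₗ[ℝ] E →ₗ[ℝ] ℝ) :
    ∑ i, B (b i) (b i) = ∑ j, B (b' j) (b' j) :=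
  calc ∑ i, B (b i) (b i) = ∑ i, ∑ j, ⟪b i, b' j⟫ * B (b' j) (b i) :=
        Finset.sum_congr rfl fun i _ => (b'.sum_inner_mul_apply (B.flip (b i)) (b i)).symm
    _ = ∑ j, ∑ i, ⟪b' j, b i⟫ * B (b' j) (b i) := by
        rw [Finset.sum_comm]; simp_rw [real_inner_comm]
    _ = ∑ j, B (b' j) (b' j) :=
        Finset.sum_congr rfl fun j _ => b.sum_inner_mul_apply (B (b' j)) (b' j)

theorem OrthonormalBasis.sum_apply_self_eq_of_orthonormal {κ : Type*} [Fintype κ]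
    (b : OrthonormalBasis ι ℝ E) (B : E →ₗ[ℝ] E →ₗ[ℝ] ℝ) {g : κ → E} (hg : Orthonormal ℝ g)
    (hB : ∀ w, (∀ k, ⟪g k, w⟫ = 0) → B w w = 0) :
    ∑ i, B (b i) (b i) = ∑ k, B (g k) (g k) := by
  classical
  have := b.toBasis.finiteDimensional_of_finite
  obtain ⟨u, b', hgu, hb'⟩ := hg.toSubtypeRange.exists_orthonormalBasis_extension
  have hu : Orthonormal ℝ ((↑) : u → E) := hb' ▸ b'.orthonormal
  have himage : Finset.univ.image g ⊆ u := fun w hw => by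
    obtain ⟨k, -, rfl⟩ := Finset.mem_image.mp hw
    exact hgu ⟨k, rfl⟩
  have hzero : ∀ w ∈ u, w ∉ Finset.univ.image g → B w w = 0 := fun w hw hwg => by
    refine hB w fun k => hu.2 (i := ⟨g k, himage (by simp)⟩) (j := ⟨w, hw⟩) fun hkw => hwg ?_
    exact Finset.mem_image.mpr ⟨k, Finset.mem_univ k, congrArg Subtype.val hkw⟩
  calc ∑ i, B (b i) (b i) = ∑ w ∈ u, B w w := by
        rw [b.sum_apply_self_eq b' B, hb']; exact Finset.sum_coe_sort u fun w => B w w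
    _ = ∑ w ∈ Finset.univ.image g, B w w := (Finset.sum_subset himage hzero).symm
    _ = ∑ k, B (g k) (g k) := Finset.sum_image fun k _ l _ hkl => hg.linearIndependent.injective hkl

noncomputable def ricci (b : OrthonormalBasis ι ℝ E)
    (R : E →ₗ[ℝ] E →ₗ[ℝ] E →ₗ[ℝ] E →ₗ[ℝ] ℝ) : E →ₗ[ℝ] E →ₗ[ℝ] ℝ :=
  ∑ i, (R (b i)).compr₂ (LinearMap.applyₗ (b i))

@[simp]
theorem ricci_apply (b : OrthonormalBasis ι ℝ E) (R : E →ₗ[ℝ] E →ₗ[ℝ] E →ₗ[ℝ] E →ₗ[ℝ] ℝ)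
    (p q : E) : ricci b R p q = ∑ i, R (b i) p q (b i) := by
  simp [ricci]

theorem ricci_add (b : OrthonormalBasis ι ℝ E) (R S : E →ₗ[ℝ] E →ₗ[ℝ] E →ₗ[ℝ] E →ₗ[ℝ] ℝ) :
    ricci b (R + S) = ricci b R + ricci b S := by
  ext p q
  simp [Finset.sum_add_distrib]

theorem ricci_smul (b : OrthonormalBasis ι ℝ E) (c : ℝ)
    (R : E →ₗ[ℝ] E →ₗ[ℝ] E →ₗ[ℝ] E →ₗ[ℝ] ℝ) : ricci b (c • R) = c • ricci b R := by
  ext p q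
  simp [Finset.mul_sum]

theorem IsCurvatureTensor.ricci_comm {R : E →ₗ[ℝ] E →ₗ[ℝ] E →ₗ[ℝ] E →ₗ[ℝ] ℝ}
    (hR : IsCurvatureTensor R) (b : OrthonormalBasis ι ℝ E) (p q : E) :
    ricci b R p q = ricci b R q p := by
  simp only [ricci_apply]
  exact Finset.sum_congr rfl fun i _ => by
    linarith [hR.pair_symm (b i) p q (b i), hR.antisymm_left q (b i) (b i) p,
      hR.antisymm_right (b i) q (b i) p]

structure IsCompatibleComplexStructure (J : E →ₗ[ℝ] E) : Prop where
  apply_apply : ∀ x, J (J x) = -x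
  inner_map_map : ∀ x y, ⟪J x, J y⟫ = ⟪x, y⟫

/-- `x` and `y` are orthogonal for the hermitian product `⟪x, y⟫ + i ⟪J x, y⟫`; for unit vectors
this says that they span an antiholomorphic plane. -/
def HermOrthogonal (J : E →ₗ[ℝ] E) (x y : E) : Prop :=
  ⟪x, y⟫ = 0 ∧ ⟪J x, y⟫ = 0

structure IsRKTensor (J : E →ₗ[ℝ] E) (R : E →ₗ[ℝ] E →ₗ[ℝ] E →ₗ[ℝ] E →ₗ[ℝ] ℝ) : Prop
    extends IsCurvatureTensor R where
  apply_J : ∀ x y z u, R x y z u = R (J x) (J y) (J z) (J u)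

variable {J : E →ₗ[ℝ] E}

theorem HermOrthogonal.smul {x y : E} (h : HermOrthogonal J x y) (c d : ℝ) :
    HermOrthogonal J (c • x) (d • y) :=
  ⟨by simp [real_inner_smul_left, real_inner_smul_right, h.1],
    by simp [real_inner_smul_left, real_inner_smul_right, h.2]⟩

theorem HermOrthogonal.of_smul {x y : E} {r s : ℝ} (h : HermOrthogonal J (r • x) (s • y))
    (hr : r ≠ 0) (hs : s ≠ 0) : HermOrthogonal J x y := by
  simpa [smul_smul, hr, hs] using h.smul r⁻¹ s⁻¹

namespace IsRKTensor

variable {R S : E →ₗ[ℝ] E →ₗ[ℝ] E →ₗ[ℝ] E →ₗ[ℝ] ℝ}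

theorem add (hR : IsRKTensor J R) (hS : IsRKTensor J S) : IsRKTensor J (R + S) where
  toIsCurvatureTensor := hR.toIsCurvatureTensor.add hS.toIsCurvatureTensor
  apply_J x y z u := by simp only [LinearMap.add_apply, ← hR.apply_J, ← hS.apply_J]

theorem smul (hR : IsRKTensor J R) (c : ℝ) : IsRKTensor J (c • R) where
  toIsCurvatureTensor := hR.toIsCurvatureTensor.smul c
  apply_J x y z u := by simp only [LinearMap.smul_apply, ← hR.apply_J]

end IsRKTensor

namespace IsCompatibleComplexStructure

variable {T : E →ₗ[ℝ] E →ₗ[ℝ] ℝ}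

theorem inner_apply_left (hJ : IsCompatibleComplexStructure J) (x y : E) :
    ⟪J x, y⟫ = -⟪x, J y⟫ := by
  rw [← hJ.inner_map_map x (J y), hJ.apply_apply, inner_neg_right, neg_neg]

theorem inner_apply_left_comm (hJ : IsCompatibleComplexStructure J) (x y : E) :
    ⟪J x, y⟫ = -⟪J y, x⟫ := by
  rw [hJ.inner_apply_left, real_inner_comm]

theorem inner_apply_self (hJ : IsCompatibleComplexStructure J) (x : E) : ⟪J x, x⟫ = 0 := by
  linarith [hJ.inner_apply_left_comm x x]

theorem norm_map (hJ : IsCompatibleComplexStructure J) (x : E) : ‖J x‖ = ‖x‖ := by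
  rw [norm_eq_sqrt_real_inner, hJ.inner_map_map, ← norm_eq_sqrt_real_inner]

theorem apply_apply_left_comm (hJ : IsCompatibleComplexStructure J) (hT : ∀ p q, T p q = T q p)
    (hTJ : ∀ p q, T (J p) (J q) = T p q) (p q : E) : T (J p) q = -T (J q) p := by
  rw [← hTJ, hJ.apply_apply, map_neg, LinearMap.neg_apply, hT]

noncomputable def toLinearIsometryEquiv (hJ : IsCompatibleComplexStructure J) : E ≃ₗᵢ[ℝ] E :=
  LinearIsometryEquiv.ofSurjective (J.isometryOfInner hJ.inner_map_map)
    fun x => ⟨-J x, by simp [hJ.apply_apply]⟩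

@[simp]
theorem toLinearIsometryEquiv_apply (hJ : IsCompatibleComplexStructure J) (x : E) :
    hJ.toLinearIsometryEquiv x = J x :=
  rfl

theorem hermOrthogonal_symm (hJ : IsCompatibleComplexStructure J) {x y : E}
    (h : HermOrthogonal J x y) : HermOrthogonal J y x :=
  ⟨by rw [real_inner_comm, h.1], by rw [hJ.inner_apply_left_comm, h.2, neg_zero]⟩

theorem hermOrthogonal_apply_left (hJ : IsCompatibleComplexStructure J) {x y : E}
    (h : HermOrthogonal J x y) : HermOrthogonal J (J x) y :=
  ⟨h.2, by rw [hJ.apply_apply, inner_neg_left, h.1, neg_zero]⟩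

theorem hermOrthogonal_apply_right (hJ : IsCompatibleComplexStructure J) {x y : E}
    (h : HermOrthogonal J x y) : HermOrthogonal J x (J y) :=
  hJ.hermOrthogonal_symm (hJ.hermOrthogonal_apply_left (hJ.hermOrthogonal_symm h))

theorem exists_hermOrthogonal_decomposition (hJ : IsCompatibleComplexStructure J) {x : E}
    (hx : x ≠ 0) (y : E) :
    ∃ a c : ℝ, ∃ y' : E, HermOrthogonal J x y' ∧ y = a • x + c • J x + y' := by
  have hx2 : ⟪x, x⟫ ≠ 0 := by simpa using hx
  refine ⟨⟪x, y⟫ / ⟪x, x⟫, ⟪J x, y⟫ / ⟪x, x⟫, _, ⟨?_, ?_⟩, (add_sub_cancel _ y).symm⟩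
  · simp only [inner_sub_right, inner_add_right, real_inner_smul_right]
    rw [real_inner_comm (J x) x, hJ.inner_apply_self]
    field_simp
    ring
  · simp only [inner_sub_right, inner_add_right, real_inner_smul_right, hJ.inner_apply_self,
      hJ.inner_map_map]
    field_simp
    ring

theorem orthonormal_frame (hJ : IsCompatibleComplexStructure J) {e y : E} (he : ‖e‖ = 1)
    (hy : ‖y‖ = 1) (hey : HermOrthogonal J e y) : Orthonormal ℝ ![e, J e, y, J y] := by
  have h₁' := hJ.hermOrthogonal_symm (hJ.hermOrthogonal_apply_left hey)
  have h₂ := hJ.hermOrthogonal_apply_right hey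
  have h₂' := hJ.hermOrthogonal_symm h₂
  have hey' := hJ.hermOrthogonal_symm hey
  have hee : ⟪e, J e⟫ = 0 := by rw [real_inner_comm, hJ.inner_apply_self]
  have hyy : ⟪y, J y⟫ = 0 := by rw [real_inner_comm, hJ.inner_apply_self]
  rw [orthonormal_iff_ite]
  intro i j
  fin_cases i <;> fin_cases j <;>
    simp [he, hy, hJ.norm_map, hJ.inner_apply_self, hee, hyy, hey.1, hey.2, h₂.1, h₂.2,
      hey'.1, hey'.2, h₁'.1, h₁'.2]

theorem sum_apply_self_eq_frame (hJ : IsCompatibleComplexStructure J) (b : OrthonormalBasis ι ℝ E)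
    (B : E →ₗ[ℝ] E →ₗ[ℝ] ℝ) {e y : E} (he : ‖e‖ = 1) (hy : ‖y‖ = 1)
    (hey : HermOrthogonal J e y)
    (hB : ∀ w, HermOrthogonal J e w → HermOrthogonal J y w → B w w = 0) :
    ∑ i, B (b i) (b i) = B e e + B (J e) (J e) + B y y + B (J y) (J y) := by
  have hB' : ∀ w, (∀ k, ⟪![e, J e, y, J y] k, w⟫ = 0) → B w w = 0 :=
    fun w hw => hB w ⟨hw 0, hw 1⟩ ⟨hw 2, hw 3⟩
  rw [b.sum_apply_self_eq_of_orthonormal B (hJ.orthonormal_frame he hy hey) hB',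
    Fin.sum_univ_four]
  rfl

theorem ricci_apply_eq_frame (hJ : IsCompatibleComplexStructure J) (b : OrthonormalBasis ι ℝ E)
    (U : E →ₗ[ℝ] E →ₗ[ℝ] E →ₗ[ℝ] E →ₗ[ℝ] ℝ) {e y p q : E}
    (he : ‖e‖ = 1) (hy : ‖y‖ = 1) (hey : HermOrthogonal J e y)
    (h : ∀ w, HermOrthogonal J e w → HermOrthogonal J y w → U w p q w = 0) :
    ricci b U p q = U e p q e + U (J e) p q (J e) + U y p q y + U (J y) p q (J y) := by
  simpa using hJ.sum_apply_self_eq_frame b ((U.flip p).flip q) he hy hey h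

end IsCompatibleComplexStructure

theorem IsRKTensor.ricci_apply_J {R : E →ₗ[ℝ] E →ₗ[ℝ] E →ₗ[ℝ] E →ₗ[ℝ] ℝ}
    (hJ : IsCompatibleComplexStructure J) (hR : IsRKTensor J R) (b : OrthonormalBasis ι ℝ E)
    (p q : E) : ricci b R (J p) (J q) = ricci b R p q := by
  have := b.sum_apply_self_eq (b.map hJ.toLinearIsometryEquiv) ((R.flip p).flip q)
  simp only [ricci_apply, hR.apply_J (b _) (J p), hJ.apply_apply, map_neg, LinearMap.neg_apply,
    neg_neg]
  simpa using this.symm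

theorem IsCurvatureTensor.ricci_sub_smul_inner_comm {R : E →ₗ[ℝ] E →ₗ[ℝ] E →ₗ[ℝ] E →ₗ[ℝ] ℝ}
    (hR : IsCurvatureTensor R) (b : OrthonormalBasis ι ℝ E) (c : ℝ) (p q : E) :
    (ricci b R - c • innerₗ E) p q = (ricci b R - c • innerₗ E) q p := by
  simp only [LinearMap.sub_apply, LinearMap.smul_apply, innerₗ_apply_apply, hR.ricci_comm b p q,
    real_inner_comm p q]

theorem IsRKTensor.ricci_sub_smul_inner_apply_J {R : E →ₗ[ℝ] E →ₗ[ℝ] E →ₗ[ℝ] E →ₗ[ℝ] ℝ}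
    (hJ : IsCompatibleComplexStructure J) (hR : IsRKTensor J R) (b : OrthonormalBasis ι ℝ E)
    (c : ℝ) (p q : E) :
    (ricci b R - c • innerₗ E) (J p) (J q) = (ricci b R - c • innerₗ E) p q := by
  simp only [LinearMap.sub_apply, LinearMap.smul_apply, innerₗ_apply_apply,
    hR.ricci_apply_J hJ b, hJ.inner_map_map]

section Vanishing

variable {U : E →ₗ[ℝ] E →ₗ[ℝ] E →ₗ[ℝ] E →ₗ[ℝ] ℝ}

theorem IsCurvatureTensor.apply_eq_zero_of_hermOrthogonal (hU : IsCurvatureTensor U)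
    (hanti : ∀ x y, HermOrthogonal J x y → U x y y x = 0) {x p q : E}
    (hp : HermOrthogonal J x p) (hq : HermOrthogonal J x q) : U x p q x = 0 := by
  have := hanti x (p + q) ⟨by rw [inner_add_right, hp.1, hq.1, add_zero],
    by rw [inner_add_right, hp.2, hq.2, add_zero]⟩
  simp only [map_add, LinearMap.add_apply, hanti x p hp, hanti x q hq, hU.middle_comm x q p]
    at this
  linarith

theorem IsCurvatureTensor.holomorphic_eq_zero (hJ : IsCompatibleComplexStructure J)
    (hU : IsCurvatureTensor U) (hE : 2 < Module.finrank ℝ E) (b : OrthonormalBasis ι ℝ E)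
    (hanti : ∀ x y, HermOrthogonal J x y → U x y y x = 0) (hRic : ricci b U = 0) (x : E) :
    U x (J x) (J x) x = 0 := by
  rcases eq_or_ne x 0 with rfl | hx
  · simp
  obtain ⟨r, -, e, he, rfl⟩ := exists_smul_norm_eq_one hx
  obtain ⟨y, hy, hey⟩ : ∃ y, ‖y‖ = 1 ∧ HermOrthogonal J e y := by
    obtain ⟨y, hy, h₁, h₂⟩ := exists_norm_eq_one_inner_eq_zero hE e (J e)
    exact ⟨y, hy, h₁, h₂⟩
  have := hJ.ricci_apply_eq_frame b U he hy hey (p := e) (q := e)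
    fun w hew _ => hanti w e (hJ.hermOrthogonal_symm hew)
  rw [hRic, hU.apply_self_left, hanti y e (hJ.hermOrthogonal_symm hey),
    hanti (J y) e (hJ.hermOrthogonal_symm (hJ.hermOrthogonal_apply_right hey)),
    ← hU.pair_symm, LinearMap.zero_apply, LinearMap.zero_apply] at this
  simp [show U e (J e) (J e) e = 0 by linarith]

theorem IsRKTensor.apply_self_J_comm (hJ : IsCompatibleComplexStructure J) (hU : IsRKTensor J U)
    (b : OrthonormalBasis ι ℝ E) (hanti : ∀ x y, HermOrthogonal J x y → U x y y x = 0)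
    (hRic : ricci b U = 0) {e y : E} (he : ‖e‖ = 1) (hy : ‖y‖ = 1)
    (hey : HermOrthogonal J e y) : U e (J e) y e = U y (J y) e y := by
  have := hJ.ricci_apply_eq_frame b U he hy hey (p := J e) (q := y) fun w hew hyw =>
    hU.apply_eq_zero_of_hermOrthogonal hanti
      (hJ.hermOrthogonal_symm (hJ.hermOrthogonal_apply_left hew)) (hJ.hermOrthogonal_symm hyw)
  have hJy : U (J y) (J e) y (J y) = -U y (J y) e y := by
    rw [hU.apply_J, hJ.apply_apply, hJ.apply_apply, ← neg_one_smul ℝ y, ← neg_one_smul ℝ e,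
      ← hU.middle_comm]
    simp only [map_smul, LinearMap.smul_apply, smul_eq_mul]
    ring
  rw [hRic, hU.apply_self_left, hU.apply_self_right, hJy, LinearMap.zero_apply,
    LinearMap.zero_apply] at this
  linarith

theorem IsCurvatureTensor.apply_self_J_add_swap_eq_zero (hJ : IsCompatibleComplexStructure J)
    (hU : IsCurvatureTensor U) (hanti : ∀ x y, HermOrthogonal J x y → U x y y x = 0) {x y : E}
    (hxy : HermOrthogonal J x y) (hnorm : ‖x‖ = ‖y‖) :
    U x (J x) y x + U y (J y) x y = 0 := by
  have hxx : ⟪x, J x⟫ = 0 := by rw [real_inner_comm, hJ.inner_apply_self]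
  have hcurve : ∀ t : ℝ, HermOrthogonal J (x + t • J y) (y + t • J x) := fun t => by
    constructor
    · simp only [inner_add_left, inner_add_right, real_inner_smul_left, real_inner_smul_right,
        hxy.1, hxx, hJ.inner_apply_self, hJ.inner_map_map]
      rw [real_inner_comm, hxy.1]
      ring
    · simp only [map_add, map_smul, hJ.apply_apply, inner_add_left, inner_add_right,
        real_inner_smul_left, real_inner_smul_right, inner_neg_left, hxy.2, hJ.inner_map_map,
        real_inner_self_eq_norm_sq, hnorm]
      rw [real_inner_comm, hxy.2]
      ring
  have := LinearMap.first_variation_eq_zero U x y (J y) (J x) fun t => hanti _ _ (hcurve t)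
  linarith [hU.pair_symm (J y) y y x, hU.antisymm_left y x (J y) y, hU.antisymm_right x y (J y) y,
    hU.pair_symm x y y (J y), hU.middle_comm x y (J x)]

theorem IsRKTensor.apply_self_J_eq_zero (hJ : IsCompatibleComplexStructure J)
    (hU : IsRKTensor J U) (b : OrthonormalBasis ι ℝ E)
    (hanti : ∀ x y, HermOrthogonal J x y → U x y y x = 0) (hRic : ricci b U = 0) {x y : E}
    (hxy : HermOrthogonal J x y) : U x (J x) y x = 0 := by
  rcases eq_or_ne x 0 with rfl | hx
  · simp
  rcases eq_or_ne y 0 with rfl | hy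
  · simp
  obtain ⟨r, hr, e, he, rfl⟩ := exists_smul_norm_eq_one hx
  obtain ⟨s, hs, f, hf, rfl⟩ := exists_smul_norm_eq_one hy
  have hef := hxy.of_smul hr hs
  have hcomm := hU.apply_self_J_comm hJ b hanti hRic he hf hef
  have hsum := hU.apply_self_J_add_swap_eq_zero hJ hanti hef (he.trans hf.symm)
  simp [show U e (J e) f e = 0 by linarith]

theorem IsRKTensor.apply_apply_eq_zero (hJ : IsCompatibleComplexStructure J)
    (hU : IsRKTensor J U) (hE : 2 < Module.finrank ℝ E) (b : OrthonormalBasis ι ℝ E)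
    (hanti : ∀ x y, HermOrthogonal J x y → U x y y x = 0) (hRic : ricci b U = 0) (x y : E) :
    U x y y x = 0 := by
  rcases eq_or_ne x 0 with rfl | hx
  · simp
  obtain ⟨a, c, y', hy', rfl⟩ := hJ.exists_hermOrthogonal_decomposition hx y
  simp only [map_add, map_smul, LinearMap.add_apply, LinearMap.smul_apply, smul_eq_mul,
    hU.apply_self_left, hU.apply_self_right]
  rw [hU.middle_comm x y' (J x), hU.holomorphic_eq_zero hJ hE b hanti hRic,
    hU.apply_self_J_eq_zero hJ b hanti hRic hy', hanti x y' hy']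
  ring

theorem IsRKTensor.eq_zero (hJ : IsCompatibleComplexStructure J) (hU : IsRKTensor J U)
    (hE : 2 < Module.finrank ℝ E) (b : OrthonormalBasis ι ℝ E)
    (hanti : ∀ x y, HermOrthogonal J x y → U x y y x = 0) (hRic : ricci b U = 0) : U = 0 :=
  hU.eq_zero_of_apply_apply_eq_zero (hU.apply_apply_eq_zero hJ hE b hanti hRic)

end Vanishing

section ModelTensors

variable (E) in
/-- The tensor `R₁`. -/
noncomputable def sphereTensor : E →ₗ[ℝ] E →ₗ[ℝ] E →ₗ[ℝ] E →ₗ[ℝ] ℝ :=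
  bilinMul₁₄ (innerₗ E) (innerₗ E) + (-1 : ℝ) • bilinMul₁₃ (innerₗ E) (innerₗ E)

/-- The tensor `ψ`, with an arbitrary bilinear form `T` in place of the Ricci tensor `S`. -/
noncomputable def psiTensor (J : E →ₗ[ℝ] E) (T : E →ₗ[ℝ] E →ₗ[ℝ] ℝ) :
    E →ₗ[ℝ] E →ₗ[ℝ] E →ₗ[ℝ] E →ₗ[ℝ] ℝ :=
  let Φ := innerₗ E ∘ₗ J
  bilinMul₁₄ (T ∘ₗ J) Φ + bilinMul₁₄ Φ (T ∘ₗ J)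
    + (-1 : ℝ) • (bilinMul₁₃ Φ (T ∘ₗ J) + bilinMul₁₃ (T ∘ₗ J) Φ)
    + (-2 : ℝ) • (bilinMul₁₂ Φ (T ∘ₗ J) + bilinMul₁₂ (T ∘ₗ J) Φ)

@[simp]
theorem sphereTensor_apply (x y z u : E) :
    sphereTensor E x y z u = ⟪y, z⟫ * ⟪x, u⟫ - ⟪x, z⟫ * ⟪y, u⟫ := by
  simp only [sphereTensor, LinearMap.add_apply, LinearMap.smul_apply, bilinMul₁₄_apply,
    bilinMul₁₃_apply, innerₗ_apply_apply, smul_eq_mul]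
  ring

@[simp]
theorem psiTensor_apply (T : E →ₗ[ℝ] E →ₗ[ℝ] ℝ) (x y z u : E) :
    psiTensor J T x y z u =
      ⟪J y, z⟫ * T (J x) u - ⟪J x, z⟫ * T (J y) u - 2 * ⟪J x, y⟫ * T (J z) u
        + ⟪J x, u⟫ * T (J y) z - ⟪J y, u⟫ * T (J x) z - 2 * ⟪J z, u⟫ * T (J x) y := by
  simp only [psiTensor, LinearMap.add_apply, LinearMap.smul_apply, bilinMul₁₄_apply,
    bilinMul₁₃_apply, bilinMul₁₂_apply, LinearMap.comp_apply, innerₗ_apply_apply, smul_eq_mul]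
  ring

theorem ricci_sphereTensor (b : OrthonormalBasis ι ℝ E) :
    ricci b (sphereTensor E) = ((Fintype.card ι : ℝ) - 1) • innerₗ E := by
  ext p q
  have hpq : ∑ i, ⟪b i, q⟫ * ⟪p, b i⟫ = ⟪p, q⟫ := by
    simp_rw [mul_comm ⟪b _, q⟫]
    exact b.sum_inner_mul_inner p q
  have hbb : ∀ i, ⟪b i, b i⟫ = 1 := fun i => by
    rw [real_inner_self_eq_norm_sq, b.norm_eq_one, one_pow]
  simp only [ricci_apply, sphereTensor_apply, hbb, mul_one, Finset.sum_sub_distrib, hpq,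
    Finset.sum_const, Finset.card_univ, nsmul_eq_mul, LinearMap.smul_apply, innerₗ_apply_apply,
    smul_eq_mul]
  ring

namespace IsCompatibleComplexStructure

variable {T : E →ₗ[ℝ] E →ₗ[ℝ] ℝ}

theorem isRKTensor_sphereTensor (hJ : IsCompatibleComplexStructure J) :
    IsRKTensor J (sphereTensor E) where
  antisymm_left x y z u := by simp only [sphereTensor_apply]; ring
  antisymm_right x y z u := by simp only [sphereTensor_apply]; ring
  bianchi x y z u := by
    simp only [sphereTensor_apply]
    rw [real_inner_comm x z, real_inner_comm x y, real_inner_comm y z]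
    ring
  apply_J x y z u := by simp only [sphereTensor_apply, hJ.inner_map_map]

theorem isRKTensor_psiTensor (hJ : IsCompatibleComplexStructure J) (hT : ∀ p q, T p q = T q p)
    (hTJ : ∀ p q, T (J p) (J q) = T p q) : IsRKTensor J (psiTensor J T) where
  antisymm_left x y z u := by
    simp only [psiTensor_apply, hJ.inner_apply_left_comm y x, hJ.apply_apply_left_comm hT hTJ y x]
    ring
  antisymm_right x y z u := by
    simp only [psiTensor_apply, hJ.inner_apply_left_comm u z, hJ.apply_apply_left_comm hT hTJ u z]
    ring
  bianchi x y z u := by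
    simp only [psiTensor_apply, hJ.inner_apply_left_comm z x, hJ.inner_apply_left_comm z y,
      hJ.inner_apply_left_comm y x, hJ.apply_apply_left_comm hT hTJ z x,
      hJ.apply_apply_left_comm hT hTJ z y, hJ.apply_apply_left_comm hT hTJ y x]
    ring
  apply_J x y z u := by simp only [psiTensor_apply, hJ.inner_map_map, hTJ]

theorem ricci_psiTensor (hJ : IsCompatibleComplexStructure J) (b : OrthonormalBasis ι ℝ E)
    (hT : ∀ p q, T p q = T q p) (hTJ : ∀ p q, T (J p) (J q) = T p q) :
    ricci b (psiTensor J T) = (6 : ℝ) • T := by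
  ext p q
  have hterm : ∀ w, psiTensor J T w p q w =
      ⟪J q, w⟫ * (T (J p) w - 2 * T (J w) p) + ⟪J p, w⟫ * (2 * T (J q) w - T (J w) q) := by
    intro w
    have hw : T (J w) w = 0 := by linarith [hJ.apply_apply_left_comm hT hTJ w w]
    simp only [psiTensor_apply, hw, hJ.inner_apply_self, hJ.inner_apply_left_comm w q,
      hJ.inner_apply_left_comm w p]
    ring
  have h₁ := b.sum_inner_mul_apply (T (J p) - (2 : ℝ) • (T.flip p ∘ₗ J)) (J q)
  have h₂ := b.sum_inner_mul_apply ((2 : ℝ) • T (J q) - T.flip q ∘ₗ J) (J p)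
  simp only [LinearMap.sub_apply, LinearMap.smul_apply, LinearMap.comp_apply,
    LinearMap.flip_apply, smul_eq_mul] at h₁ h₂
  rw [ricci_apply, Finset.sum_congr rfl fun i _ => hterm (b i), Finset.sum_add_distrib, h₁, h₂,
    hJ.apply_apply, hJ.apply_apply, hTJ, hTJ]
  simp only [map_neg, LinearMap.neg_apply, LinearMap.smul_apply, smul_eq_mul, hT q p]
  ring

end IsCompatibleComplexStructure

end ModelTensors

theorem apply_apply_eq_of_hermOrthogonal {R : E →ₗ[ℝ] E →ₗ[ℝ] E →ₗ[ℝ] E →ₗ[ℝ] ℝ} {ν : ℝ}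
    (hν : ∀ x y : E, ‖x‖ = 1 → ‖y‖ = 1 → ⟪x, y⟫ = 0 → ⟪J x, y⟫ = 0 → R x y y x = ν) {x y : E}
    (hxy : HermOrthogonal J x y) : R x y y x = ν * (‖x‖ ^ 2 * ‖y‖ ^ 2) := by
  rcases eq_or_ne x 0 with rfl | hx
  · simp
  rcases eq_or_ne y 0 with rfl | hy
  · simp
  obtain ⟨r, hr, e, he, rfl⟩ := exists_smul_norm_eq_one hx
  obtain ⟨s, hs, f, hf, rfl⟩ := exists_smul_norm_eq_one hy
  have hef := hxy.of_smul hr hs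
  simp only [map_smul, LinearMap.smul_apply, smul_eq_mul, hν e f he hf hef.1 hef.2, norm_smul,
    Real.norm_eq_abs, sq_abs, he, hf, mul_one]
  ring

end InnerProductSpace

/-- Proposition 1, equation (6): an RK-curvature tensor of constant antiholomorphic
sectional curvature ν satisfies R = (1/6)ψ + ν R₁ - ((2n-1)/3) ν R₂. -/
theorem stmt_2 {E : Type*} [NormedAddCommGroup E] [InnerProductSpace ℝ E]
    {n : ℕ} (hn : 4 ≤ 2 * n)
    (b : OrthonormalBasis (Fin (2 * n)) ℝ E)
    (J : E →ₗ[ℝ] E)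
    (hJ2 : ∀ x : E, J (J x) = -x)
    (hJg : ∀ x y : E, ⟪J x, J y⟫ = ⟪x, y⟫)
    (R : E →ₗ[ℝ] E →ₗ[ℝ] E →ₗ[ℝ] E →ₗ[ℝ] ℝ)
    (hR1 : ∀ x y z u : E, R x y z u = - R y x z u)
    (hR2 : ∀ x y z u : E, R x y z u = - R x y u z)
    (hRb : ∀ x y z u : E, R x y z u + R y z x u + R z x y u = 0)
    (hRK : ∀ x y z u : E, R x y z u = R (J x) (J y) (J z) (J u))
    (ν : ℝ)
    (hν : ∀ x y : E, ‖x‖ = 1 → ‖y‖ = 1 → ⟪x, y⟫ = 0 → ⟪J x, y⟫ = 0 →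
      R x y y x = ν)
    (S : E → E → ℝ)
    (hS : ∀ x y : E, S x y = ∑ i, R (b i) x y (b i))
    (R₁ : E → E → E → E → ℝ)
    (hR₁def : ∀ x y z u : E, R₁ x y z u = ⟪y, z⟫ * ⟪x, u⟫ - ⟪x, z⟫ * ⟪y, u⟫)
    (R₂ : E → E → E → E → ℝ)
    (hR₂def : ∀ x y z u : E, R₂ x y z u =
      ⟪J y, z⟫ * ⟪J x, u⟫ - ⟪J x, z⟫ * ⟪J y, u⟫ - 2 * ⟪J x, y⟫ * ⟪J z, u⟫)
    (ψ : E → E → E → E → ℝ)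
    (hψdef : ∀ x y z u : E, ψ x y z u =
      ⟪J y, z⟫ * S (J x) u - ⟪J x, z⟫ * S (J y) u - 2 * ⟪J x, y⟫ * S (J z) u
      + ⟪J x, u⟫ * S (J y) z - ⟪J y, u⟫ * S (J x) z - 2 * ⟪J z, u⟫ * S (J x) y) :
    ∀ x y z u : E, R x y z u =
      (1 / 6) * ψ x y z u + ν * R₁ x y z u
        - ((2 * (n : ℝ) - 1) / 3) * ν * R₂ x y z u := by
  have hJ : IsCompatibleComplexStructure J := ⟨hJ2, hJg⟩
  have hR : IsRKTensor J R := ⟨⟨hR1, hR2, hRb⟩, hRK⟩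
  have hE : 2 < Module.finrank ℝ E := by
    rw [Module.finrank_eq_card_basis b.toBasis, Fintype.card_fin]
    omega
  set T := ricci b R - (ν * (2 * n - 1)) • innerₗ E with hT_def
  have hT : ∀ p q, T p q = T q p := hR.ricci_sub_smul_inner_comm b _
  have hTJ : ∀ p q, T (J p) (J q) = T p q := hR.ricci_sub_smul_inner_apply_J hJ b _
  set U := R + (-ν) • sphereTensor E + (-1 / 6 : ℝ) • psiTensor J T with hU_def
  have hU : IsRKTensor J U :=
    (hR.add (hJ.isRKTensor_sphereTensor.smul _)).add ((hJ.isRKTensor_psiTensor hT hTJ).smul _)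
  have hanti : ∀ x y, HermOrthogonal J x y → U x y y x = 0 := fun x y hxy => by
    have hyx := hJ.hermOrthogonal_symm hxy
    simp only [hU_def, LinearMap.add_apply, LinearMap.smul_apply, smul_eq_mul,
      apply_apply_eq_of_hermOrthogonal hν hxy, sphereTensor_apply, psiTensor_apply,
      real_inner_self_eq_norm_sq, hxy.1, hxy.2, hyx.1, hyx.2, hJ.inner_apply_self]
    ring
  have hRic : ricci b U = 0 := by
    rw [hU_def, ricci_add, ricci_add, ricci_smul, ricci_smul, ricci_sphereTensor,
      hJ.ricci_psiTensor b hT hTJ, hT_def]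
    ext p q
    simp only [LinearMap.add_apply, LinearMap.sub_apply, LinearMap.smul_apply, smul_eq_mul,
      innerₗ_apply_apply, LinearMap.zero_apply, Fintype.card_fin, Nat.cast_mul, Nat.cast_ofNat]
    ring
  intro x y z u
  have := congrArg (fun V => V x y z u) (hU.eq_zero hJ hE b hanti hRic)
  simp only [hU_def, hT_def, LinearMap.add_apply, LinearMap.sub_apply, LinearMap.smul_apply,
    smul_eq_mul, sphereTensor_apply, psiTensor_apply, ricci_apply, innerₗ_apply_apply,
    LinearMap.zero_apply] at this
  rw [hψdef, hR₁def, hR₂def]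
  simp only [hS]
  linear_combination this
end

section
/- Let E be a real inner product space of dimension 2n with 2n ≥ 4, J a compatible almost complex structure, and R an algebraic curvature tensor on E that is an RK-tensor and has constant antiholomorphic sectional curvature ν. If moreover R is Einstein, i.e. its Ricci tensor satisfies S(x,y) = λ⟨x,y⟩ for some constant λ and all x,y ∈ E, then R has constant holomorphic sectional curvature: R(x,Jx,Jx,x) = λ - 2(n-1)ν for every unit vector x ∈ E. -/
/-!
Compute the Ricci curvature `S(x, x) = λ` in an orthonormal basis whose first two vectors are
`x` and `J x`; the trace defining `S` does not depend on the basis. The vector `x` contributes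
nothing and `J x` contributes the holomorphic sectional curvature `R(x, Jx, Jx, x)`, while every
one of the remaining `2n - 2` basis vectors spans an antiholomorphic plane with `x`, hence
contributes `ν`.
-/

open scoped RealInnerProductSpace

section

variable {E : Type*} [NormedAddCommGroup E] [InnerProductSpace ℝ E]

theorem LinearMap.sum_apply_orthonormalBasis_eq {ι κ : Type*} [Fintype ι] [Fintype κ]
    (B : E →ₗ[ℝ] E →ₗ[ℝ] ℝ) (b : OrthonormalBasis ι ℝ E) (c : OrthonormalBasis κ ℝ E) :
    ∑ i, B (b i) (b i) = ∑ k, B (c k) (c k) := by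
  -- `B u v = ⟪u, T v⟫` for this `T`, so both sums are the trace of `T`.
  let T : E →ₗ[ℝ] E := ∑ i, (B (b i)).smulRight (b i)
  have hT : ∀ v, ⟪v, T v⟫ = B v v := fun v => by
    have hB : B v v = ∑ i, ⟪b i, v⟫ * B (b i) v := by
      nth_rw 1 [← b.sum_repr' v]
      simp [map_sum, map_smul]
    simp [T, hB, inner_sum, inner_smul_right, real_inner_comm, mul_comm]
  simp only [← hT, ← LinearMap.trace_eq_sum_inner]

theorem OrthonormalBasis.exists_apply_eq_of_orthonormal_pair {ι : Type*} [Fintype ι]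
    (hcard : Module.finrank ℝ E = Fintype.card ι) {i j : ι} (hij : i ≠ j) {x y : E}
    (hx : ‖x‖ = 1) (hy : ‖y‖ = 1) (hxy : ⟪x, y⟫ = 0) :
    ∃ c : OrthonormalBasis ι ℝ E, c i = x ∧ c j = y := by
  classical
  have : FiniteDimensional ℝ E :=
    Module.finite_of_finrank_pos (hcard ▸ Fintype.card_pos_iff.mpr ⟨i⟩)
  let v : ι → E := fun k => if k = i then x else y
  have hv : Orthonormal ℝ (({i, j} : Set ι).domRestrict v) := by
    rw [orthonormal_iff_ite]
    rintro ⟨k, hk⟩ ⟨l, hl⟩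
    simp only [Set.mem_insert_iff, Set.mem_singleton_iff] at hk hl
    rcases hk with rfl | rfl <;> rcases hl with rfl | rfl <;>
      simp [v, hij, hij.symm, hxy, real_inner_comm, hx, hy]
  obtain ⟨c, hc⟩ := hv.exists_orthonormalBasis_extension_of_card_eq hcard
  exact ⟨c, by simp [hc i, v], by simp [hc j, v, hij.symm]⟩

theorem inner_map_left_eq_neg {J : E →ₗ[ℝ] E} (hJ2 : ∀ x : E, J (J x) = -x)
    (hJg : ∀ x y : E, ⟪J x, J y⟫ = ⟪x, y⟫) (u v : E) : ⟪J u, v⟫ = -⟪u, J v⟫ := by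
  rw [← hJg, hJ2, inner_neg_left]

theorem inner_self_map_eq_zero {J : E →ₗ[ℝ] E} (hJ2 : ∀ x : E, J (J x) = -x)
    (hJg : ∀ x y : E, ⟪J x, J y⟫ = ⟪x, y⟫) (x : E) : ⟪x, J x⟫ = 0 := by
  have := inner_map_left_eq_neg hJ2 hJg x x
  rw [real_inner_comm] at this
  linarith

theorem norm_map_eq {J : E →ₗ[ℝ] E} (hJg : ∀ x y : E, ⟪J x, J y⟫ = ⟪x, y⟫) (x : E) :
    ‖J x‖ = ‖x‖ := by
  rw [norm_eq_sqrt_real_inner, hJg, ← norm_eq_sqrt_real_inner]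

theorem ricci_sum_eq_of_adapted_basis {ι : Type*} [Fintype ι] {J : E →ₗ[ℝ] E}
    (hJ2 : ∀ x : E, J (J x) = -x) (hJg : ∀ x y : E, ⟪J x, J y⟫ = ⟪x, y⟫)
    {R : E →ₗ[ℝ] E →ₗ[ℝ] E →ₗ[ℝ] E →ₗ[ℝ] ℝ}
    (hR1 : ∀ x y z u : E, R x y z u = - R y x z u)
    (hR2 : ∀ x y z u : E, R x y z u = - R x y u z) {ν : ℝ}
    (hν : ∀ x y : E, ‖x‖ = 1 → ‖y‖ = 1 → ⟪x, y⟫ = 0 → ⟪J x, y⟫ = 0 → R x y y x = ν)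
    (c : OrthonormalBasis ι ℝ E) {i j : ι} (hij : i ≠ j) {x : E} (hx : ‖x‖ = 1)
    (hci : c i = x) (hcj : c j = J x) :
    ∑ k, R (c k) x x (c k) = R x (J x) (J x) x + ((Fintype.card ι : ℝ) - 2) * ν := by
  classical
  have hantiholomorphic : ∀ k ∈ ({i, j} : Finset ι)ᶜ, R (c k) x x (c k) = ν := by
    intro k hk
    simp only [Finset.mem_compl, Finset.mem_insert, Finset.mem_singleton, not_or] at hk
    have hkx : ⟪c k, x⟫ = 0 := hci ▸ c.orthonormal.2 hk.1
    have hkJx : ⟪c k, J x⟫ = 0 := hcj ▸ c.orthonormal.2 hk.2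
    refine hν _ _ (c.orthonormal.1 k) hx hkx ?_
    rw [inner_map_left_eq_neg hJ2 hJg, hkJx, neg_zero]
  have hxx : R x x x x = 0 := by linarith [hR1 x x x x]
  have hJxx : R (J x) x x (J x) = R x (J x) (J x) x := by
    rw [hR1, hR2, neg_neg]
  have hcard : 2 ≤ Fintype.card ι := by
    simpa [Finset.card_pair hij] using Finset.card_le_univ ({i, j} : Finset ι)
  rw [← Finset.sum_compl_add_sum {i, j}, Finset.sum_pair hij, hci, hcj,
    Finset.sum_congr rfl hantiholomorphic, Finset.sum_const, Finset.card_compl,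
    Finset.card_pair hij, nsmul_eq_mul, Nat.cast_sub hcard, hxx, hJxx]
  push_cast
  ring

end

theorem stmt_5_general {E : Type*} [NormedAddCommGroup E] [InnerProductSpace ℝ E]
    {n : ℕ} (hn : 4 ≤ 2 * n)
    (b : OrthonormalBasis (Fin (2 * n)) ℝ E)
    (J : E →ₗ[ℝ] E)
    (hJ2 : ∀ x : E, J (J x) = -x)
    (hJg : ∀ x y : E, ⟪J x, J y⟫ = ⟪x, y⟫)
    (R : E →ₗ[ℝ] E →ₗ[ℝ] E →ₗ[ℝ] E →ₗ[ℝ] ℝ)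
    (hR1 : ∀ x y z u : E, R x y z u = - R y x z u)
    (hR2 : ∀ x y z u : E, R x y z u = - R x y u z)
    (ν : ℝ)
    (hν : ∀ x y : E, ‖x‖ = 1 → ‖y‖ = 1 → ⟪x, y⟫ = 0 → ⟪J x, y⟫ = 0 →
      R x y y x = ν)
    (S : E → E → ℝ)
    (hS : ∀ x y : E, S x y = ∑ i, R (b i) x y (b i))
    (lam : ℝ)
    (hEinstein : ∀ x y : E, S x y = lam * ⟪x, y⟫) :
    ∀ x : E, ‖x‖ = 1 → R x (J x) (J x) x = lam - 2 * ((n : ℝ) - 1) * ν := by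
  intro x hx
  have h01 : (⟨0, by omega⟩ : Fin (2 * n)) ≠ ⟨1, by omega⟩ := by simp
  obtain ⟨c, hc0, hc1⟩ := OrthonormalBasis.exists_apply_eq_of_orthonormal_pair
    (Module.finrank_eq_card_basis b.toBasis) h01 hx (by rw [norm_map_eq hJg, hx])
    (inner_self_map_eq_zero hJ2 hJg x)
  have hlam : lam = ∑ i, R (b i) x x (b i) := by
    rw [← hS, hEinstein, real_inner_self_eq_norm_sq, hx, one_pow, mul_one]
  have hbasis := ((R.flip x).flip x).sum_apply_orthonormalBasis_eq b c
  simp only [LinearMap.flip_apply] at hbasis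
  rw [hlam, hbasis,
    ricci_sum_eq_of_adapted_basis hJ2 hJg hR1 hR2 hν c h01 hx hc0 hc1, Fintype.card_fin]
  push_cast
  ring

/-- For an RK-curvature tensor of constant antiholomorphic sectional curvature ν on a
2n-dimensional space (2n ≥ 4): if moreover R is Einstein with S = λ g, then R(x,Jx,Jx,x) = λ - 2(n-1)ν for every unit x. -/
theorem stmt_5 {E : Type*} [NormedAddCommGroup E] [InnerProductSpace ℝ E]
    {n : ℕ} (hn : 4 ≤ 2 * n)
    (b : OrthonormalBasis (Fin (2 * n)) ℝ E)
    (J : E →ₗ[ℝ] E)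
    (hJ2 : ∀ x : E, J (J x) = -x)
    (hJg : ∀ x y : E, ⟪J x, J y⟫ = ⟪x, y⟫)
    (R : E →ₗ[ℝ] E →ₗ[ℝ] E →ₗ[ℝ] E →ₗ[ℝ] ℝ)
    (hR1 : ∀ x y z u : E, R x y z u = - R y x z u)
    (hR2 : ∀ x y z u : E, R x y z u = - R x y u z)
    (hRb : ∀ x y z u : E, R x y z u + R y z x u + R z x y u = 0)
    (hRK : ∀ x y z u : E, R x y z u = R (J x) (J y) (J z) (J u))
    (ν : ℝ)
    (hν : ∀ x y : E, ‖x‖ = 1 → ‖y‖ = 1 → ⟪x, y⟫ = 0 → ⟪J x, y⟫ = 0 →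
      R x y y x = ν)
    (S : E → E → ℝ)
    (hS : ∀ x y : E, S x y = ∑ i, R (b i) x y (b i))
    (lam : ℝ)
    (hEinstein : ∀ x y : E, S x y = lam * ⟪x, y⟫) :
    ∀ x : E, ‖x‖ = 1 → R x (J x) (J x) x = lam - 2 * ((n : ℝ) - 1) * ν :=
  stmt_5_general hn b J hJ2 hJg R hR1 hR2 ν hν S hS lam hEinstein
end

section
/- Let E be a real inner product space of dimension 2n with 2n ≥ 4, J a compatible almost complex structure, and R an algebraic curvature tensor on E that is an RK-tensor and has constant antiholomorphic sectional curvature ν. Define T = R - (1/6)ψ - ν·R₁ + ((2n-1)/3)·ν·R₂. Then T(x,y,y,x) = 0 for every orthonormal pair {x,y} with y = Jx (holomorphic plane) or with ⟨Jx,y⟩ = 0 (antiholomorphic plane). -/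
open scoped RealInnerProductSpace

/-!
For a unit vector `v`, the form `u ↦ R u v v u` vanishes on `v` and equals `ν ‖u‖²` on the
orthogonal complement of `{v, J v}`, since that complement spans antiholomorphic planes with `v`.
Splitting each basis vector along `v`, `J v` and this complement, the trace defining `S v v`
collapses to `R (J v) v v (J v) + (2n - 2) ν`. On a holomorphic plane `{x, J x}` this makes
`ψ / 6` equal to `R (J x) x x (J x) + (2n - 2) ν`, which the remaining terms of `T` cancel exactly;
on an antiholomorphic plane every term of `ψ` and `R₂` vanishes and `R x y y x = ν = ν R₁ x y y x`.
-/

section InnerProduct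

variable {E : Type*} [NormedAddCommGroup E] [InnerProductSpace ℝ E]

lemma inner_apply_eq_neg_inner_apply_of_compatible {J : E →ₗ[ℝ] E} (hJ2 : ∀ x, J (J x) = -x)
    (hJg : ∀ x y, ⟪J x, J y⟫ = ⟪x, y⟫) (x y : E) : ⟪J x, y⟫ = -⟪x, J y⟫ := by
  have h := hJg x (J y)
  rw [hJ2, inner_neg_right] at h
  linarith

lemma inner_apply_self_eq_zero_of_compatible {J : E →ₗ[ℝ] E} (hJ2 : ∀ x, J (J x) = -x)
    (hJg : ∀ x y, ⟪J x, J y⟫ = ⟪x, y⟫) (x : E) : ⟪J x, x⟫ = 0 := by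
  linarith [inner_apply_eq_neg_inner_apply_of_compatible hJ2 hJg x x, real_inner_comm (J x) x]

lemma LinearMap.BilinForm.apply_self_eq_inner_mul_of_orthogonal {B : LinearMap.BilinForm ℝ E}
    {u₁ u₂ : E} {ν : ℝ} (hB : ∀ u, ‖u‖ = 1 → ⟪u₁, u⟫ = 0 → ⟪u₂, u⟫ = 0 → B u u = ν)
    {w : E} (h₁ : ⟪u₁, w⟫ = 0) (h₂ : ⟪u₂, w⟫ = 0) : B w w = ⟪w, w⟫ * ν := by
  rcases eq_or_ne w 0 with rfl | hw
  · simp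
  have hw' : ‖w‖ ≠ 0 := norm_ne_zero_iff.mpr hw
  have hunit := hB (‖w‖⁻¹ • w) (norm_smul_inv_norm hw)
    (by rw [inner_smul_right, h₁, mul_zero]) (by rw [inner_smul_right, h₂, mul_zero])
  simp only [map_smul, LinearMap.smul_apply, smul_eq_mul] at hunit
  rw [real_inner_self_eq_norm_mul_norm, ← hunit]
  field_simp

namespace OrthonormalBasis

variable {ι : Type*} [Fintype ι] (b : OrthonormalBasis ι ℝ E) {u₁ u₂ : E}

noncomputable def orthogonalPart (u₁ u₂ : E) (i : ι) : E :=
  b i - ⟪u₁, b i⟫ • u₁ - ⟪u₂, b i⟫ • u₂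

lemma sum_inner_mul_inner' (x y : E) : ∑ i, ⟪x, b i⟫ * ⟪y, b i⟫ = ⟪x, y⟫ := by
  rw [← b.sum_inner_mul_inner x y]
  exact Finset.sum_congr rfl fun i _ => by rw [real_inner_comm y]

lemma inner_left_orthogonalPart (h₁₁ : ⟪u₁, u₁⟫ = 1) (h₁₂ : ⟪u₁, u₂⟫ = 0) (i : ι) :
    ⟪u₁, b.orthogonalPart u₁ u₂ i⟫ = 0 := by
  simp only [orthogonalPart, inner_sub_right, real_inner_smul_right, h₁₁, h₁₂]
  ring

lemma inner_right_orthogonalPart (h₂₂ : ⟪u₂, u₂⟫ = 1) (h₁₂ : ⟪u₁, u₂⟫ = 0) (i : ι) :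
    ⟪u₂, b.orthogonalPart u₁ u₂ i⟫ = 0 := by
  simp only [orthogonalPart, inner_sub_right, real_inner_smul_right, h₂₂, real_inner_comm u₁ u₂,
    h₁₂]
  ring

lemma sum_inner_orthogonalPart_self (h₁₁ : ⟪u₁, u₁⟫ = 1) (h₂₂ : ⟪u₂, u₂⟫ = 1)
    (h₁₂ : ⟪u₁, u₂⟫ = 0) :
    ∑ i, ⟪b.orthogonalPart u₁ u₂ i, b.orthogonalPart u₁ u₂ i⟫ = Fintype.card ι - 2 := by
  have hnorm (i : ι) : ⟪b.orthogonalPart u₁ u₂ i, b.orthogonalPart u₁ u₂ i⟫ =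
      1 - ⟪u₁, b i⟫ * ⟪u₁, b i⟫ - ⟪u₂, b i⟫ * ⟪u₂, b i⟫ := by
    simp only [orthogonalPart, inner_sub_left, inner_sub_right, real_inner_smul_left,
      real_inner_smul_right, h₁₁, h₂₂, real_inner_comm u₁ u₂, h₁₂, real_inner_comm u₁ (b i),
      real_inner_comm u₂ (b i), b.inner_eq_one]
    ring
  simp only [hnorm, Finset.sum_sub_distrib, sum_inner_mul_inner', h₁₁, h₂₂, Finset.sum_const,
    Finset.card_univ, nsmul_eq_mul, mul_one]
  ring

lemma sum_inner_smul_orthogonalPart (h₂₂ : ⟪u₂, u₂⟫ = 1) (h₁₂ : ⟪u₁, u₂⟫ = 0) :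
    ∑ i, ⟪u₂, b i⟫ • b.orthogonalPart u₁ u₂ i = 0 := by
  simp only [orthogonalPart, smul_sub, smul_smul, Finset.sum_sub_distrib, ← Finset.sum_smul,
    sum_inner_mul_inner', real_inner_comm u₁ u₂, h₁₂, h₂₂, zero_smul, one_smul, sub_zero]
  have hrepr : ∑ i, ⟪u₂, b i⟫ • b i = u₂ := by
    simpa only [real_inner_comm u₂] using b.sum_repr' u₂
  rw [hrepr, sub_self]

lemma sum_apply_self_eq_s7 {B : LinearMap.BilinForm ℝ E} {ν : ℝ} (h₁₁ : ⟪u₁, u₁⟫ = 1)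
    (h₂₂ : ⟪u₂, u₂⟫ = 1) (h₁₂ : ⟪u₁, u₂⟫ = 0) (hBl : ∀ z, B u₁ z = 0) (hBr : ∀ z, B z u₁ = 0)
    (hB : ∀ u, ‖u‖ = 1 → ⟪u₁, u⟫ = 0 → ⟪u₂, u⟫ = 0 → B u u = ν) :
    ∑ i, B (b i) (b i) = B u₂ u₂ + (Fintype.card ι - 2) * ν := by
  set w := b.orthogonalPart u₁ u₂
  have hb (i : ι) : b i = w i + ⟪u₁, b i⟫ • u₁ + ⟪u₂, b i⟫ • u₂ := by
    simp only [w, orthogonalPart]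
    abel
  have hw (i : ι) : B (w i) (w i) = ⟪w i, w i⟫ * ν :=
    B.apply_self_eq_inner_mul_of_orthogonal hB (b.inner_left_orthogonalPart h₁₁ h₁₂ i)
      (b.inner_right_orthogonalPart h₂₂ h₁₂ i)
  have hexpand (i : ι) : B (b i) (b i) = ⟪w i, w i⟫ * ν + ⟪u₂, b i⟫ * ⟪u₂, b i⟫ * B u₂ u₂
      + ⟪u₂, b i⟫ * B (w i) u₂ + ⟪u₂, b i⟫ * B u₂ (w i) := by
    conv_lhs => rw [hb i]
    simp only [map_add, map_smul, LinearMap.add_apply, LinearMap.smul_apply, smul_eq_mul, hBl,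
      hBr, hw]
    ring
  have hsum : ∑ i, ⟪u₂, b i⟫ • w i = 0 := b.sum_inner_smul_orthogonalPart h₂₂ h₁₂
  have hleft : ∑ i, ⟪u₂, b i⟫ * B (w i) u₂ = 0 := by
    simpa [map_sum, LinearMap.sum_apply] using congrArg (fun z => B z u₂) hsum
  have hright : ∑ i, ⟪u₂, b i⟫ * B u₂ (w i) = 0 := by
    simpa [map_sum] using congrArg (B u₂) hsum
  have hnorm : ∑ i, ⟪w i, w i⟫ = Fintype.card ι - 2 := b.sum_inner_orthogonalPart_self h₁₁ h₂₂ h₁₂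
  simp only [hexpand, Finset.sum_add_distrib, ← Finset.sum_mul, hleft, hright,
    sum_inner_mul_inner', h₂₂, hnorm]
  ring

end OrthonormalBasis

end InnerProduct

section Curvature

variable {E : Type*} [NormedAddCommGroup E] [InnerProductSpace ℝ E]
  {R : E →ₗ[ℝ] E →ₗ[ℝ] E →ₗ[ℝ] E →ₗ[ℝ] ℝ}

lemma curvature_apply_self_left (hR1 : ∀ x y z u : E, R x y z u = - R y x z u) (x z u : E) :
    R x x z u = 0 := by
  linarith [hR1 x x z u]

lemma curvature_apply_self_right (hR2 : ∀ x y z u : E, R x y z u = - R x y u z) (x y z : E) :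
    R x y z z = 0 := by
  linarith [hR2 x y z z]

lemma curvature_apply_swap (hR1 : ∀ x y z u : E, R x y z u = - R y x z u)
    (hR2 : ∀ x y z u : E, R x y z u = - R x y u z) (x y : E) : R x y y x = R y x x y := by
  linarith [hR1 x y y x, hR2 y x y x]

lemma curvature_apply_neg_neg (x y z u : E) : R (-x) y z (-u) = R x y z u := by
  simp only [← neg_one_smul ℝ x, ← neg_one_smul ℝ u, map_smul, LinearMap.smul_apply, smul_eq_mul]
  ring

lemma sum_curvature_basis_eq {ι : Type*} [Fintype ι] (b : OrthonormalBasis ι ℝ E)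
    {J : E →ₗ[ℝ] E} (hJ2 : ∀ x, J (J x) = -x) (hJg : ∀ x y, ⟪J x, J y⟫ = ⟪x, y⟫)
    (hR1 : ∀ x y z u : E, R x y z u = - R y x z u) (hR2 : ∀ x y z u : E, R x y z u = - R x y u z)
    {ν : ℝ} (hν : ∀ x y : E, ‖x‖ = 1 → ‖y‖ = 1 → ⟪x, y⟫ = 0 → ⟪J x, y⟫ = 0 → R x y y x = ν)
    {v : E} (hv : ‖v‖ = 1) :
    ∑ i, R (b i) v v (b i) = R (J v) v v (J v) + (Fintype.card ι - 2) * ν := by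
  have hvv : ⟪v, v⟫ = 1 := by rw [real_inner_self_eq_norm_sq, hv, one_pow]
  have hvJv : ⟪v, J v⟫ = 0 := by
    rw [real_inner_comm, inner_apply_self_eq_zero_of_compatible hJ2 hJg]
  exact b.sum_apply_self_eq_s7 (B := (R.flip v).flip v) hvv (by rwa [hJg]) hvJv
    (curvature_apply_self_left hR1 v v) (fun z => curvature_apply_self_right hR2 z v v)
    (fun u hu hvu hJvu => by simpa [curvature_apply_swap hR1 hR2 u] using hν v u hv hu hvu hJvu)

end Curvature

theorem stmt_7_general {E : Type*} [NormedAddCommGroup E] [InnerProductSpace ℝ E]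
    {n : ℕ}
    (b : OrthonormalBasis (Fin (2 * n)) ℝ E)
    (J : E →ₗ[ℝ] E)
    (hJ2 : ∀ x : E, J (J x) = -x)
    (hJg : ∀ x y : E, ⟪J x, J y⟫ = ⟪x, y⟫)
    (R : E →ₗ[ℝ] E →ₗ[ℝ] E →ₗ[ℝ] E →ₗ[ℝ] ℝ)
    (hR1 : ∀ x y z u : E, R x y z u = - R y x z u)
    (hR2 : ∀ x y z u : E, R x y z u = - R x y u z)
    (ν : ℝ)
    (hν : ∀ x y : E, ‖x‖ = 1 → ‖y‖ = 1 → ⟪x, y⟫ = 0 → ⟪J x, y⟫ = 0 →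
      R x y y x = ν)
    (S : E → E → ℝ)
    (hS : ∀ x y : E, S x y = ∑ i, R (b i) x y (b i))
    (R₁ : E → E → E → E → ℝ)
    (hR₁def : ∀ x y z u : E, R₁ x y z u = ⟪y, z⟫ * ⟪x, u⟫ - ⟪x, z⟫ * ⟪y, u⟫)
    (R₂ : E → E → E → E → ℝ)
    (hR₂def : ∀ x y z u : E, R₂ x y z u =
      ⟪J y, z⟫ * ⟪J x, u⟫ - ⟪J x, z⟫ * ⟪J y, u⟫ - 2 * ⟪J x, y⟫ * ⟪J z, u⟫)
    (ψ : E → E → E → E → ℝ)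
    (hψdef : ∀ x y z u : E, ψ x y z u =
      ⟪J y, z⟫ * S (J x) u - ⟪J x, z⟫ * S (J y) u - 2 * ⟪J x, y⟫ * S (J z) u
      + ⟪J x, u⟫ * S (J y) z - ⟪J y, u⟫ * S (J x) z - 2 * ⟪J z, u⟫ * S (J x) y)
    (T : E → E → E → E → ℝ)
    (hTdef : ∀ x y z u : E, T x y z u = R x y z u - (1 / 6) * ψ x y z u
      - ν * R₁ x y z u + ((2 * (n : ℝ) - 1) / 3) * ν * R₂ x y z u) :
    ∀ x y : E, ‖x‖ = 1 → ‖y‖ = 1 → ⟪x, y⟫ = 0 →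
      (y = J x ∨ ⟪J x, y⟫ = 0) → T x y y x = 0 := by
  intro x y hx hy hxy hplane
  have hxx : ⟪x, x⟫ = 1 := by rw [real_inner_self_eq_norm_sq, hx, one_pow]
  have hJxx : ⟪J x, x⟫ = 0 := inner_apply_self_eq_zero_of_compatible hJ2 hJg x
  rcases hplane with rfl | hanti
  · have hRic (v : E) (hv : ‖v‖ = 1) : S v v = R (J v) v v (J v) + (2 * n - 2) * ν := by
      simpa [hS] using sum_curvature_basis_eq b hJ2 hJg hR1 hR2 hν hv
    have hJx : ‖J x‖ = 1 := by rw [norm_eq_sqrt_real_inner, hJg, ← norm_eq_sqrt_real_inner, hx]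
    have hSx := hRic x hx
    have hSJx := hRic (J x) hJx
    rw [hJ2, curvature_apply_neg_neg, curvature_apply_swap hR1 hR2 x] at hSJx
    have hSneg (u w : E) : S (-u) w = -S u w := by
      simp only [hS, ← neg_one_smul ℝ u, map_smul, LinearMap.smul_apply, smul_eq_mul,
        ← Finset.mul_sum]
      ring
    rw [hTdef, hψdef, hR₁def, hR₂def]
    simp only [hJ2, inner_neg_left, hSneg, hJg, hxx, hxy, hJxx, hSx, hSJx,
      curvature_apply_swap hR1 hR2 x]
    ring
  · have hJyx : ⟪J y, x⟫ = 0 := by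
      rw [inner_apply_eq_neg_inner_apply_of_compatible hJ2 hJg, real_inner_comm, hanti, neg_zero]
    have hyy : ⟪y, y⟫ = 1 := by rw [real_inner_self_eq_norm_sq, hy, one_pow]
    rw [hTdef, hψdef, hR₁def, hR₂def, hν x y hx hy hxy hanti, hanti, hJyx, hJxx, hxx, hyy,
      inner_apply_self_eq_zero_of_compatible hJ2 hJg y, real_inner_comm x y, hxy]
    ring

/-- Proposition 1, equation (6): an RK-curvature tensor of constant antiholomorphic
sectional curvature ν gives a tensor T = R - (1/6)ψ - ν R₁ + ((2n-1)/3) ν R₂ vanishing on holomorphic and antiholomorphic planes. -/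
theorem stmt_7 {E : Type*} [NormedAddCommGroup E] [InnerProductSpace ℝ E]
    {n : ℕ} (hn : 4 ≤ 2 * n)
    (b : OrthonormalBasis (Fin (2 * n)) ℝ E)
    (J : E →ₗ[ℝ] E)
    (hJ2 : ∀ x : E, J (J x) = -x)
    (hJg : ∀ x y : E, ⟪J x, J y⟫ = ⟪x, y⟫)
    (R : E →ₗ[ℝ] E →ₗ[ℝ] E →ₗ[ℝ] E →ₗ[ℝ] ℝ)
    (hR1 : ∀ x y z u : E, R x y z u = - R y x z u)
    (hR2 : ∀ x y z u : E, R x y z u = - R x y u z)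
    (hRb : ∀ x y z u : E, R x y z u + R y z x u + R z x y u = 0)
    (hRK : ∀ x y z u : E, R x y z u = R (J x) (J y) (J z) (J u))
    (ν : ℝ)
    (hν : ∀ x y : E, ‖x‖ = 1 → ‖y‖ = 1 → ⟪x, y⟫ = 0 → ⟪J x, y⟫ = 0 →
      R x y y x = ν)
    (S : E → E → ℝ)
    (hS : ∀ x y : E, S x y = ∑ i, R (b i) x y (b i))
    (R₁ : E → E → E → E → ℝ)
    (hR₁def : ∀ x y z u : E, R₁ x y z u = ⟪y, z⟫ * ⟪x, u⟫ - ⟪x, z⟫ * ⟪y, u⟫)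
    (R₂ : E → E → E → E → ℝ)
    (hR₂def : ∀ x y z u : E, R₂ x y z u =
      ⟪J y, z⟫ * ⟪J x, u⟫ - ⟪J x, z⟫ * ⟪J y, u⟫ - 2 * ⟪J x, y⟫ * ⟪J z, u⟫)
    (ψ : E → E → E → E → ℝ)
    (hψdef : ∀ x y z u : E, ψ x y z u =
      ⟪J y, z⟫ * S (J x) u - ⟪J x, z⟫ * S (J y) u - 2 * ⟪J x, y⟫ * S (J z) u
      + ⟪J x, u⟫ * S (J y) z - ⟪J y, u⟫ * S (J x) z - 2 * ⟪J z, u⟫ * S (J x) y)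
    (T : E → E → E → E → ℝ)
    (hTdef : ∀ x y z u : E, T x y z u = R x y z u - (1 / 6) * ψ x y z u
      - ν * R₁ x y z u + ((2 * (n : ℝ) - 1) / 3) * ν * R₂ x y z u) :
    ∀ x y : E, ‖x‖ = 1 → ‖y‖ = 1 → ⟪x, y⟫ = 0 →
      (y = J x ∨ ⟪J x, y⟫ = 0) → T x y y x = 0 :=
  stmt_7_general b J hJ2 hJg R hR1 hR2 ν hν S hS R₁ hR₁def R₂ hR₂def ψ hψdef T hTdef
end
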